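/- arXiv:2010.12230 — 2 statements merged into one kernel-verified Lean document; each statement's English description precedes it below -/
import Mathlib

section
/- Exact-penalty equivalence for KL-constrained distributionally robust label shift (Proposition 1): Let L ≥ 1, let ℓ : Fin L → ℝ be a bounded loss vector satisfying 0 ≤ ℓ_y ≤ M for all y and some M > 0, and let p ∈ Δ^L have p_y > 0 for every y (p is not on the boundary of the simplex). Then for every r > 0 there exists γ* > 0 such that for every γ_c ≥ γ*, the set of maximizers of the linear objective π ↦ Σ_{y=1}^L π_y ℓ_y over the constrained set {π ∈ Δ^L : KL(π, p) ≤ r} coincides with the set of maximizers over all of Δ^L of the penalized objective π ↦ Σ_{y=1}^L π_y ℓ_y + min{0, γ_c (r − KL(π, p))}. -/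
/-! If `KL(π, p) = K > r`, the mixture `(r/K) π + (1 - r/K) p` lies in the KL ball, by convexity
of `KL(·, p)` and `KL(p, p) = 0`, and its objective is smaller by at most
`(1 - r/K) M < (M/r)(K - r)`. Hence once `γ ≥ M/r` the penalty `γ (K - r)` outweighs anything
gained by leaving the ball: penalized maximizers are feasible, and on the ball the penalty
vanishes. -/

open scoped BigOperators

noncomputable section

/-- The probability simplex in `ℝ^L`. -/
def simplex (L : ℕ) : Set (Fin L → ℝ) :=
  {π | (∀ i, 0 ≤ π i) ∧ ∑ i, π i = 1}

/-- KL divergence between two vectors on the simplex (with `0 log 0 = 0`). -/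
def klDiv {L : ℕ} (a b : Fin L → ℝ) : ℝ :=
  ∑ i, a i * Real.log (a i / b i)

lemma argmax_constrained_eq_argmax_penalized {α : Type*} {S : Set α} {f g : α → ℝ} {r γ : ℝ}
    (hγ : 0 ≤ γ)
    (hrepair : ∀ x ∈ S, r < g x → ∃ y ∈ S, g y ≤ r ∧ f x - γ * (g x - r) < f y) :
    {x | (x ∈ S ∧ g x ≤ r) ∧ ∀ y, y ∈ S → g y ≤ r → f y ≤ f x} =
      {x | x ∈ S ∧ ∀ y ∈ S, f y + min 0 (γ * (r - g y)) ≤ f x + min 0 (γ * (r - g x))} := by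
  have penalty_feasible : ∀ x, g x ≤ r → min 0 (γ * (r - g x)) = 0 := fun x hx =>
    min_eq_left (mul_nonneg hγ (sub_nonneg.2 hx))
  have penalty_infeasible : ∀ x, r < g x → min 0 (γ * (r - g x)) = -(γ * (g x - r)) := by
    intro x hx
    rw [min_eq_right (mul_nonpos_of_nonneg_of_nonpos hγ (by linarith))]
    ring
  ext x
  constructor
  · rintro ⟨⟨hxS, hxr⟩, hmax⟩
    refine ⟨hxS, fun y hyS => ?_⟩
    rw [penalty_feasible x hxr]
    rcases le_or_gt (g y) r with hyr | hyr
    · rw [penalty_feasible y hyr]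
      linarith [hmax y hyS hyr]
    · obtain ⟨z, hzS, hzr, hz⟩ := hrepair y hyS hyr
      rw [penalty_infeasible y hyr]
      linarith [hmax z hzS hzr]
  · rintro ⟨hxS, hmax⟩
    have hxr : g x ≤ r := by
      by_contra! hxr
      obtain ⟨z, hzS, hzr, hz⟩ := hrepair x hxS hxr
      have hxz := hmax z hzS
      rw [penalty_feasible z hzr, penalty_infeasible x hxr] at hxz
      linarith
    refine ⟨⟨hxS, hxr⟩, fun y hyS hyr => ?_⟩
    have hxy := hmax y hyS
    rw [penalty_feasible x hxr, penalty_feasible y hyr] at hxy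
    linarith

lemma mul_log_div_eq_sub {b : ℝ} (hb : b ≠ 0) (x : ℝ) :
    x * Real.log (x / b) = x * Real.log x - x * Real.log b := by
  rcases eq_or_ne x 0 with rfl | hx
  · simp
  · rw [Real.log_div hx hb, mul_sub]

lemma convexOn_mul_log_div {b : ℝ} (hb : b ≠ 0) :
    ConvexOn ℝ (Set.Ici 0) fun x => x * Real.log (x / b) := by
  refine ⟨convex_Ici 0, fun x hx y hy s t hs ht hst => ?_⟩
  have h := Real.convexOn_mul_log.2 hx hy hs ht hst
  simp only [smul_eq_mul, mul_log_div_eq_sub hb] at h ⊢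
  linear_combination h

lemma convexOn_klDiv {L : ℕ} {p : Fin L → ℝ} (hp : ∀ i, p i ≠ 0) :
    ConvexOn ℝ (Set.Ici 0) fun a : Fin L → ℝ => klDiv a p :=
  ⟨convex_Ici 0, fun a ha b hb s t hs ht hst => by
    simp only [klDiv, Pi.add_apply, Pi.smul_apply, smul_eq_mul, Finset.mul_sum,
      ← Finset.sum_add_distrib]
    exact Finset.sum_le_sum fun i _ => (convexOn_mul_log_div (hp i)).2 (ha i) (hb i) hs ht hst⟩

lemma klDiv_self {L : ℕ} {p : Fin L → ℝ} (hp : ∀ i, p i ≠ 0) : klDiv p p = 0 :=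
  Finset.sum_eq_zero fun i _ => by rw [div_self (hp i), Real.log_one, mul_zero]

lemma dotProduct_le_of_mem_simplex {L : ℕ} {π ℓ : Fin L → ℝ} {M : ℝ} (hπ : π ∈ simplex L)
    (hℓ : ∀ y, ℓ y ≤ M) : π ⬝ᵥ ℓ ≤ M :=
  calc π ⬝ᵥ ℓ ≤ π ⬝ᵥ (M • 1) :=
        dotProduct_le_dotProduct_of_nonneg_left (fun y => by simpa using hℓ y) hπ.1
    _ = M := by rw [dotProduct_smul, dotProduct_one, hπ.2, smul_eq_mul, mul_one]

lemma dotProduct_sub_dotProduct_le {L : ℕ} {π π' ℓ : Fin L → ℝ} {M : ℝ} (hπ : π ∈ simplex L)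
    (hπ' : π' ∈ simplex L) (hℓ : ∀ y, 0 ≤ ℓ y ∧ ℓ y ≤ M) : π ⬝ᵥ ℓ - π' ⬝ᵥ ℓ ≤ M := by
  have hnonneg : 0 ≤ π' ⬝ᵥ ℓ := dotProduct_nonneg_of_nonneg hπ'.1 fun y => (hℓ y).1
  linarith [dotProduct_le_of_mem_simplex hπ fun y => (hℓ y).2]

lemma exists_mem_klBall_sub_mul_lt {L : ℕ} {ℓ p π : Fin L → ℝ} {M r γ : ℝ} (hM : 0 < M)
    (hp : p ∈ simplex L) (hp0 : ∀ y, p y ≠ 0) (hπ : π ∈ simplex L)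
    (hgap : π ⬝ᵥ ℓ - p ⬝ᵥ ℓ ≤ M) (hr : 0 < r) (hγ : M / r ≤ γ) (hπr : r < klDiv π p) :
    ∃ π' ∈ simplex L, klDiv π' p ≤ r ∧ π ⬝ᵥ ℓ - γ * (klDiv π p - r) < π' ⬝ᵥ ℓ := by
  set K := klDiv π p
  have hK : 0 < K := hr.trans hπr
  set s := r / K
  have hs : s ≤ 1 := (div_le_one hK).2 hπr.le
  have hmix : s + (1 - s) = 1 := add_sub_cancel _ _
  refine ⟨s • π + (1 - s) • p,
    convex_stdSimplex ℝ (Fin L) hπ hp (by positivity) (sub_nonneg.2 hs) hmix, ?_, ?_⟩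
  · calc klDiv (s • π + (1 - s) • p) p ≤ s * K + (1 - s) * klDiv p p :=
          (convexOn_klDiv hp0).2 hπ.1 hp.1 (by positivity) (sub_nonneg.2 hs) hmix
      _ = r := by rw [klDiv_self hp0, mul_zero, add_zero, div_mul_cancel₀ r hK.ne']
  · have hobj : (s • π + (1 - s) • p) ⬝ᵥ ℓ = π ⬝ᵥ ℓ - (1 - s) * (π ⬝ᵥ ℓ - p ⬝ᵥ ℓ) := by
      rw [add_dotProduct, smul_dotProduct, smul_dotProduct, smul_eq_mul, smul_eq_mul]
      ring
    have hloss : (1 - s) * M < γ * (K - r) :=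
      calc (1 - s) * M = M / K * (K - r) := by simp only [s]; field_simp
        _ < M / r * (K - r) := by gcongr
        _ ≤ γ * (K - r) := by gcongr
    rw [hobj]
    linarith [mul_le_mul_of_nonneg_left hgap (sub_nonneg.2 hs)]

theorem exact_penalty_equivalence_general
    {L : ℕ} (ℓ : Fin L → ℝ) (M : ℝ) (hM : 0 < M)
    (hℓ : ∀ y, 0 ≤ ℓ y ∧ ℓ y ≤ M)
    (p : Fin L → ℝ) (hp : p ∈ simplex L) (hppos : ∀ y, 0 < p y)
    (r : ℝ) (hr : 0 < r) :
    ∃ γstar > (0 : ℝ), ∀ γc ≥ γstar,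
      {π | (π ∈ simplex L ∧ klDiv π p ≤ r) ∧
          ∀ π', π' ∈ simplex L → klDiv π' p ≤ r →
            ∑ y, π' y * ℓ y ≤ ∑ y, π y * ℓ y}
      =
      {π | π ∈ simplex L ∧
          ∀ π' ∈ simplex L,
            (∑ y, π' y * ℓ y) + min 0 (γc * (r - klDiv π' p)) ≤
            (∑ y, π y * ℓ y) + min 0 (γc * (r - klDiv π p))} :=
  ⟨M / r, div_pos hM hr, fun _ hγc =>
    argmax_constrained_eq_argmax_penalized ((div_pos hM hr).le.trans hγc) fun _ hπ hπr =>
      exists_mem_klBall_sub_mul_lt hM hp (fun y => (hppos y).ne') hπ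
        (dotProduct_sub_dotProduct_le hπ hp hℓ) hr hγc hπr⟩

/-- **Proposition 1** (exact-penalty equivalence for KL-constrained DRO label shift):
for every radius `r > 0` there is `γ* > 0` such that for all `γc ≥ γ*`, the maximizers of the
linear loss over the KL-ball intersected with the simplex coincide with the maximizers over the
whole simplex of the penalized objective. -/
theorem exact_penalty_equivalence
    {L : ℕ} (hL : 1 ≤ L) (ℓ : Fin L → ℝ) (M : ℝ) (hM : 0 < M)
    (hℓ : ∀ y, 0 ≤ ℓ y ∧ ℓ y ≤ M)
    (p : Fin L → ℝ) (hp : p ∈ simplex L) (hppos : ∀ y, 0 < p y)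
    (r : ℝ) (hr : 0 < r) :
    ∃ γstar > (0 : ℝ), ∀ γc ≥ γstar,
      {π | (π ∈ simplex L ∧ klDiv π p ≤ r) ∧
          ∀ π', π' ∈ simplex L → klDiv π' p ≤ r →
            ∑ y, π' y * ℓ y ≤ ∑ y, π y * ℓ y}
      =
      {π | π ∈ simplex L ∧
          ∀ π' ∈ simplex L,
            (∑ y, π' y * ℓ y) + min 0 (γc * (r - klDiv π' p)) ≤
            (∑ y, π y * ℓ y) + min 0 (γc * (r - klDiv π p))} :=
  exact_penalty_equivalence_general ℓ M hM hℓ p hp hppos r hr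

end
end

section
/- Regret inequality for the proximal KL mirror step (used in the convergence proof): Let h : Δ^L → ℝ be concave and differentiable on a neighborhood of Δ^L, let λ > 0, g ∈ ℝ^L, and let π_k ∈ Δ^L have all coordinates strictly positive. Let π_{k+1} be a minimizer over Δ^L of π ↦ −2λ⟨g, π⟩ − 2λ h(π) + KL(π, π_k), and assume all coordinates of π_{k+1} are strictly positive. Then for every π* ∈ Δ^L: 2λ ( ⟨g, π* − π_k⟩ + h(π*) − h(π_{k+1}) ) ≤ KL(π*, π_k) − KL(π*, π_{k+1}) + 2λ²‖g‖_∞². -/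
/-!
Along the segment from `π_{k+1}` towards `π*`, minimality of `π_{k+1}` and concavity of `h` bound
`2λ(⟨g, π* − π_{k+1}⟩ + h(π*) − h(π_{k+1}))` by the directional derivative of `KL(·, π_k)` at
`π_{k+1}`, which the three-point identity turns into
`KL(π*, π_k) − KL(π*, π_{k+1}) − KL(π_{k+1}, π_k)`. The remaining term satisfies
`2λ⟨g, π_{k+1} − π_k⟩ ≤ 2λ‖g‖_∞‖π_{k+1} − π_k‖₁ ≤ 2λ²‖g‖_∞² + ½‖π_{k+1} − π_k‖₁²`, and Pinsker's
inequality absorbs the last summand into `KL(π_{k+1}, π_k)`.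
-/

open scoped BigOperators

noncomputable section

open Finset

section

open Real Filter Topology
open InformationTheory (klFun klFun_apply klFun_one hasDerivAt_klFun)

lemma log_le_two_mul_sub_one_div_add_one {x : ℝ} (hx₀ : 0 < x) (hx₁ : x ≤ 1) :
    log x ≤ 2 * (x - 1) / (x + 1) := by
  have h := le_log_one_add_of_nonneg (sub_nonneg.2 ((one_le_inv₀ hx₀).2 hx₁))
  rw [add_sub_cancel, log_inv] at h
  have e : 2 * (x⁻¹ - 1) / (x⁻¹ - 1 + 2) = -(2 * (x - 1) / (x + 1)) := by
    rw [show x⁻¹ - 1 + 2 = (x + 1) / x by field_simp; ring]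
    field_simp
    ring
  linarith

lemma two_mul_sub_one_div_add_one_le_log {x : ℝ} (hx : 1 ≤ x) :
    2 * (x - 1) / (x + 1) ≤ log x := by
  have h := le_log_one_add_of_nonneg (sub_nonneg.2 hx)
  rwa [add_sub_cancel, sub_add, show (1 : ℝ) - 2 = -1 by norm_num, sub_neg_eq_add] at h

-- The difference `F` vanishes at `1`, and by the two logarithm bounds above its derivative
-- `4 ((y + 1) log y - 2 (y - 1))` has the sign of `y - 1`.
lemma three_mul_sq_sub_one_le_klFun {x : ℝ} (hx : 0 ≤ x) :
    3 * (x - 1) ^ 2 ≤ 2 * (x + 2) * klFun x := by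
  set F : ℝ → ℝ := fun y ↦ 2 * (y + 2) * klFun y - 3 * (y - 1) ^ 2
  have hF : Continuous F := by fun_prop
  have hF₁ : F 1 = 0 := by simp [F, klFun_one]
  have hF' {y : ℝ} (hy : y ≠ 0) : HasDerivAt F (4 * ((y + 1) * log y - 2 * (y - 1))) y := by
    have h := ((((hasDerivAt_id' y).add_const 2).const_mul 2).fun_mul
      (hasDerivAt_klFun hy)).fun_sub ((((hasDerivAt_id' y).sub_const 1).fun_pow 2).const_mul 3)
    refine h.congr_deriv ?_
    rw [klFun_apply]
    ring
  suffices 0 ≤ F x by simp only [F] at this; linarith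
  rcases le_total x 1 with hx₁ | hx₁
  · have hanti : AntitoneOn F (Set.Icc 0 1) := by
      refine antitoneOn_of_deriv_nonpos (convex_Icc 0 1) hF.continuousOn
        (fun y hy ↦ ?_) (fun y hy ↦ ?_) <;> rw [interior_Icc] at hy
      · exact (hF' hy.1.ne').differentiableAt.differentiableWithinAt
      · rw [(hF' hy.1.ne').deriv]
        have := log_le_two_mul_sub_one_div_add_one hy.1 hy.2.le
        rw [le_div_iff₀ (by linarith [hy.1])] at this
        linarith
    simpa [hF₁] using hanti ⟨hx, hx₁⟩ ⟨zero_le_one, le_rfl⟩ hx₁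
  · have hmono : MonotoneOn F (Set.Ici 1) := by
      refine monotoneOn_of_deriv_nonneg (convex_Ici 1) hF.continuousOn
        (fun y hy ↦ ?_) (fun y hy ↦ ?_) <;> rw [interior_Ici] at hy <;>
        have hy₀ : y ≠ 0 := by linarith [hy.out]
      · exact (hF' hy₀).differentiableAt.differentiableWithinAt
      · rw [(hF' hy₀).deriv]
        have := two_mul_sub_one_div_add_one_le_log hy.out.le
        rw [div_le_iff₀ (by linarith [hy.out])] at this
        linarith
    simpa [hF₁] using hmono Set.self_mem_Ici hx₁ hx₁

lemma three_mul_sq_sub_le {a b : ℝ} (ha : 0 ≤ a) (hb : 0 < b) :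
    3 * (a - b) ^ 2 ≤ 2 * (a + 2 * b) * (a * log (a / b) - a + b) := by
  have hb' := hb.ne'
  calc 3 * (a - b) ^ 2 = b ^ 2 * (3 * (a / b - 1) ^ 2) := by field_simp
    _ ≤ b ^ 2 * (2 * (a / b + 2) * klFun (a / b)) :=
      mul_le_mul_of_nonneg_left (three_mul_sq_sub_one_le_klFun (by positivity)) (sq_nonneg b)
    _ = 2 * (a + 2 * b) * (a * log (a / b) - a + b) := by
      rw [klFun_apply]
      set l := log (a / b)
      field_simp
      ring

-- Pinsker's inequality: Cauchy–Schwarz with the weights `(a i + 2 b i) / 3` reduces it to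
-- `three_mul_sq_sub_le`.
lemma sq_sum_abs_sub_le_two_mul_klDiv {L : ℕ} {a b : Fin L → ℝ} (ha : a ∈ simplex L)
    (hb : b ∈ simplex L) (hb₀ : ∀ i, 0 < b i) :
    (∑ i, |a i - b i|) ^ 2 ≤ 2 * klDiv a b := by
  obtain ⟨ha₀, ha₁⟩ := ha
  obtain ⟨-, hb₁⟩ := hb
  set w : Fin L → ℝ := fun i ↦ (a i + 2 * b i) / 3
  have hw₀ : ∀ i ∈ univ, 0 < w i := fun i _ ↦ by have := ha₀ i; have := hb₀ i; positivity
  have hw₁ : ∑ i, w i = 1 := by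
    simp only [w, ← sum_div, sum_add_distrib, ← mul_sum, ha₁, hb₁]
    norm_num
  calc (∑ i, |a i - b i|) ^ 2
      ≤ ∑ i, |a i - b i| ^ 2 / w i := by
        simpa [hw₁] using sq_sum_div_le_sum_sq_div univ (fun i ↦ |a i - b i|) hw₀
    _ ≤ ∑ i, 2 * (a i * log (a i / b i) - a i + b i) := by
        refine sum_le_sum fun i hi ↦ ?_
        rw [sq_abs, div_le_iff₀ (hw₀ i hi)]
        have := three_mul_sq_sub_le (ha₀ i) (hb₀ i)
        simp only [w]
        linarith
    _ = 2 * klDiv a b := by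
        simp only [← mul_sum, sum_add_distrib, sum_sub_distrib, ha₁, hb₁, klDiv]
        ring

lemma sum_mul_le_iSup_abs_mul_sum_abs {L : ℕ} (g x : Fin L → ℝ) :
    ∑ i, g i * x i ≤ (⨆ i, |g i|) * ∑ i, |x i| := by
  rw [mul_sum]
  refine sum_le_sum fun i _ ↦ ?_
  calc g i * x i ≤ |g i| * |x i| := by rw [← abs_mul]; exact le_abs_self _
    _ ≤ (⨆ j, |g j|) * |x i| :=
      mul_le_mul_of_nonneg_right
        (le_ciSup (f := fun j ↦ |g j|) (Set.finite_range _).bddAbove i) (abs_nonneg _)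

lemma two_mul_sum_mul_sub_le_klDiv {L : ℕ} {lam : ℝ} (hlam : 0 ≤ lam) (g : Fin L → ℝ)
    {a b : Fin L → ℝ} (ha : a ∈ simplex L) (hb : b ∈ simplex L) (hb₀ : ∀ i, 0 < b i) :
    2 * lam * ∑ i, g i * (a i - b i) ≤ 2 * lam ^ 2 * (⨆ i, |g i|) ^ 2 + klDiv a b := by
  set M := ⨆ i, |g i|
  set s := ∑ i, |a i - b i|
  have holder : 2 * lam * ∑ i, g i * (a i - b i) ≤ 2 * lam * (M * s) :=
    mul_le_mul_of_nonneg_left (sum_mul_le_iSup_abs_mul_sum_abs g _) (by positivity)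
  have pinsker : s ^ 2 ≤ 2 * klDiv a b := sq_sum_abs_sub_le_two_mul_klDiv ha hb hb₀
  nlinarith [sq_nonneg (2 * lam * M - s)]

lemma klDiv_sub_klDiv_sub_klDiv {L : ℕ} (s : Fin L → ℝ) {c p : Fin L → ℝ}
    (hc : ∀ i, c i ≠ 0) (hp : ∀ i, p i ≠ 0) :
    klDiv s p - klDiv s c - klDiv c p = ∑ i, (s i - c i) * log (c i / p i) := by
  simp only [klDiv, ← sum_sub_distrib]
  refine sum_congr rfl fun i _ ↦ ?_
  rcases eq_or_ne (s i) 0 with hs | hs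
  · simp [hs]
  · rw [log_div hs (hp i), log_div hs (hc i), log_div (hc i) (hp i)]
    ring

lemma hasDerivAt_klDiv_add_smul {L : ℕ} {c p : Fin L → ℝ} (hc : ∀ i, c i ≠ 0)
    (hp : ∀ i, p i ≠ 0) (d : Fin L → ℝ) :
    HasDerivAt (fun t : ℝ ↦ klDiv (c + t • d) p) (∑ i, d i * (log (c i / p i) + 1)) 0 := by
  simp only [klDiv, Pi.add_apply, Pi.smul_apply, smul_eq_mul]
  refine HasDerivAt.fun_sum fun i _ ↦ ?_
  have hline : HasDerivAt (fun t : ℝ ↦ c i + t * d i) (d i) 0 := by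
    simpa using ((hasDerivAt_id' (0 : ℝ)).mul_const (d i)).const_add (c i)
  have hlog := (hline.div_const (p i)).log (by simpa using div_ne_zero (hc i) (hp i))
  refine (hline.fun_mul hlog).congr_deriv ?_
  rw [zero_mul, add_zero, div_div_div_cancel_right₀ (hp i), mul_div_cancel₀ _ (hc i)]
  ring

lemma le_of_hasDerivAt_of_eventually_mul_le_sub {φ : ℝ → ℝ} {φ' A : ℝ} (hφ : HasDerivAt φ φ' 0)
    (hA : ∀ᶠ t in 𝓝[>] 0, A * t ≤ φ t - φ 0) : A ≤ φ' := by
  have hslope : Tendsto (slope φ 0) (𝓝[>] 0) (𝓝 φ') :=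
    (hasDerivAt_iff_tendsto_slope.1 hφ).mono_left (nhdsWithin_mono 0 fun t ht ↦ ne_of_gt ht)
  refine ge_of_tendsto hslope ?_
  filter_upwards [hA, self_mem_nhdsWithin] with t ht (htpos : 0 < t)
  rw [slope_def_field, sub_zero, le_div_iff₀ htpos]
  exact ht

def klProxObjective {L : ℕ} (lam : ℝ) (g : Fin L → ℝ) (h : (Fin L → ℝ) → ℝ)
    (p x : Fin L → ℝ) : ℝ :=
  -(2 * lam) * ∑ i, g i * x i - 2 * lam * h x + klDiv x p

variable {L : ℕ} {h : (Fin L → ℝ) → ℝ} {lam : ℝ} {g c p q : Fin L → ℝ}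

lemma mul_regret_le_klDiv_segment_sub (hconc : ConcaveOn ℝ (simplex L) h) (hlam : 0 ≤ lam)
    (hc : c ∈ simplex L) (hmin : IsMinOn (klProxObjective lam g h p) (simplex L) c)
    (hq : q ∈ simplex L) {t : ℝ} (ht₀ : 0 ≤ t) (ht₁ : t ≤ 1) :
    2 * lam * ((∑ i, g i * (q i - c i)) + h q - h c) * t
      ≤ klDiv (c + t • (q - c)) p - klDiv c p := by
  have hseg : c + t • (q - c) = (1 - t) • c + t • q := by module
  have hmem : c + t • (q - c) ∈ simplex L := by
    rw [hseg]
    exact convex_stdSimplex ℝ (Fin L) hc hq (by linarith) ht₀ (by ring)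
  have hconcave : (1 - t) * h c + t * h q ≤ h (c + t • (q - c)) := by
    rw [hseg]
    exact hconc.2 hc hq (by linarith) ht₀ (by ring)
  have hlin : ∑ i, g i * (c + t • (q - c)) i = ∑ i, g i * c i + t * ∑ i, g i * (q i - c i) := by
    rw [mul_sum, ← sum_add_distrib]
    refine sum_congr rfl fun i _ ↦ ?_
    simp only [Pi.add_apply, Pi.smul_apply, Pi.sub_apply, smul_eq_mul]
    ring
  have hmin_t := isMinOn_iff.1 hmin _ hmem
  simp only [klProxObjective, hlin] at hmin_t
  nlinarith [mul_le_mul_of_nonneg_left hconcave (by positivity : (0 : ℝ) ≤ 2 * lam)]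

lemma mul_regret_le_sum_mul_log (hconc : ConcaveOn ℝ (simplex L) h) (hlam : 0 ≤ lam)
    (hc : c ∈ simplex L) (hc₀ : ∀ i, c i ≠ 0) (hp₀ : ∀ i, p i ≠ 0)
    (hmin : IsMinOn (klProxObjective lam g h p) (simplex L) c) (hq : q ∈ simplex L) :
    2 * lam * ((∑ i, g i * (q i - c i)) + h q - h c) ≤ ∑ i, (q i - c i) * log (c i / p i) := by
  have hsum : ∑ i, (q i - c i) = 0 := by rw [sum_sub_distrib, hq.2, hc.2, sub_self]
  have hderiv := hasDerivAt_klDiv_add_smul hc₀ hp₀ (q - c)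
  simp only [Pi.sub_apply, mul_add, mul_one, sum_add_distrib, hsum, add_zero] at hderiv
  refine le_of_hasDerivAt_of_eventually_mul_le_sub hderiv ?_
  filter_upwards [Ioo_mem_nhdsGT zero_lt_one] with t ht
  simpa using mul_regret_le_klDiv_segment_sub hconc hlam hc hmin hq ht.1.le ht.2.le

end

theorem kl_mirror_regret_general
    {L : ℕ} (h : (Fin L → ℝ) → ℝ)
    (hconc : ConcaveOn ℝ (simplex L) h)
    (lam : ℝ) (hlam : 0 < lam) (g : Fin L → ℝ)
    (πk : Fin L → ℝ) (hπk : πk ∈ simplex L) (hπkpos : ∀ i, 0 < πk i)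
    (πk1 : Fin L → ℝ) (hπk1 : πk1 ∈ simplex L) (hπk1pos : ∀ i, 0 < πk1 i)
    (hmin : ∀ π ∈ simplex L,
      (-(2 * lam) * ∑ i, g i * πk1 i - 2 * lam * h πk1 + klDiv πk1 πk)
        ≤ (-(2 * lam) * ∑ i, g i * π i - 2 * lam * h π + klDiv π πk)) :
    ∀ πstar ∈ simplex L,
      2 * lam * ((∑ i, g i * (πstar i - πk i)) + h πstar - h πk1)
        ≤ klDiv πstar πk - klDiv πstar πk1 + 2 * lam ^ 2 * (⨆ i, |g i|) ^ 2 := by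
  intro πstar hπstar
  have hπk_ne i : πk i ≠ 0 := (hπkpos i).ne'
  have hπk1_ne i : πk1 i ≠ 0 := (hπk1pos i).ne'
  have hopt := mul_regret_le_sum_mul_log hconc hlam.le hπk1 hπk1_ne hπk_ne hmin hπstar
  rw [← klDiv_sub_klDiv_sub_klDiv πstar hπk1_ne hπk_ne] at hopt
  have hstep := two_mul_sum_mul_sub_le_klDiv hlam.le g hπk1 hπk hπkpos
  have hsplit : ∑ i, g i * (πstar i - πk i)
      = ∑ i, g i * (πstar i - πk1 i) + ∑ i, g i * (πk1 i - πk i) := by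
    rw [← sum_add_distrib]
    exact sum_congr rfl fun i _ ↦ by ring
  rw [hsplit]
  linarith

/-- **Regret inequality for the proximal KL mirror step**: if `π_{k+1}` minimizes
`π ↦ −2λ⟨g, π⟩ − 2λh(π) + KL(π, π_k)` over the simplex, then for every `π*` in the simplex,
`2λ(⟨g, π* − π_k⟩ + h(π*) − h(π_{k+1})) ≤ KL(π*, π_k) − KL(π*, π_{k+1}) + 2λ²‖g‖_∞²`. -/
theorem kl_mirror_regret
    {L : ℕ} (h : (Fin L → ℝ) → ℝ)
    (hconc : ConcaveOn ℝ (simplex L) h)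
    (U : Set (Fin L → ℝ)) (hUopen : IsOpen U) (hUsub : simplex L ⊆ U)
    (hdiff : DifferentiableOn ℝ h U)
    (lam : ℝ) (hlam : 0 < lam) (g : Fin L → ℝ)
    (πk : Fin L → ℝ) (hπk : πk ∈ simplex L) (hπkpos : ∀ i, 0 < πk i)
    (πk1 : Fin L → ℝ) (hπk1 : πk1 ∈ simplex L) (hπk1pos : ∀ i, 0 < πk1 i)
    (hmin : ∀ π ∈ simplex L,
      (-(2 * lam) * ∑ i, g i * πk1 i - 2 * lam * h πk1 + klDiv πk1 πk)
        ≤ (-(2 * lam) * ∑ i, g i * π i - 2 * lam * h π + klDiv π πk)) :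
    ∀ πstar ∈ simplex L,
      2 * lam * ((∑ i, g i * (πstar i - πk i)) + h πstar - h πk1)
        ≤ klDiv πstar πk - klDiv πstar πk1 + 2 * lam ^ 2 * (⨆ i, |g i|) ^ 2 :=
  kl_mirror_regret_general h hconc lam hlam g πk hπk hπkpos πk1 hπk1 hπk1pos hmin

end
end
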